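/- Let H = P(SU_ν(2)) be the coordinate Hopf algebra of quantum SU(2) with generators α, γ, and let B₁ be the unital *-algebra generated by x, x*, y = y* with relations x x* = x* x = 1, x y = q y x, x* y = q⁻¹ y x* (0 < q ≤ 1). For each n ≥ 1 there exists a unique unital algebra homomorphism τ⁽ⁿ⁾ : P(SU_ν(2)) → B₁ with τ⁽ⁿ⁾(α) = xⁿ, τ⁽ⁿ⁾(α*) = (x*)ⁿ, τ⁽ⁿ⁾(γ) = τ⁽ⁿ⁾(γ*) = 0, and τ⁽ⁿ⁾ is convolution invertible with inverse τ⁽ⁿ⁾ ∘ S. -/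
import Mathlib


open TensorProduct

/-! Quantum cylinder algebra `B₁`. -/

inductive CylRel (q : ℝ) : FreeAlgebra ℂ (Fin 3) → FreeAlgebra ℂ (Fin 3) → Prop
  | unitary₁ : CylRel q (FreeAlgebra.ι ℂ 0 * FreeAlgebra.ι ℂ 1) 1
  | unitary₂ : CylRel q (FreeAlgebra.ι ℂ 1 * FreeAlgebra.ι ℂ 0) 1
  | comm₁ : CylRel q (FreeAlgebra.ι ℂ 0 * FreeAlgebra.ι ℂ 2)
      ((q : ℂ) • (FreeAlgebra.ι ℂ 2 * FreeAlgebra.ι ℂ 0))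
  | comm₂ : CylRel q (FreeAlgebra.ι ℂ 1 * FreeAlgebra.ι ℂ 2)
      ((q : ℂ)⁻¹ • (FreeAlgebra.ι ℂ 2 * FreeAlgebra.ι ℂ 1))

abbrev CylAlg (q : ℝ) : Type := RingQuot (CylRel q)

noncomputable def xGen (q : ℝ) : CylAlg q :=
  RingQuot.mkAlgHom ℂ (CylRel q) (FreeAlgebra.ι ℂ 0)
noncomputable def xsGen (q : ℝ) : CylAlg q :=
  RingQuot.mkAlgHom ℂ (CylRel q) (FreeAlgebra.ι ℂ 1)
noncomputable def yGen (q : ℝ) : CylAlg q :=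
  RingQuot.mkAlgHom ℂ (CylRel q) (FreeAlgebra.ι ℂ 2)

/-! The coordinate algebra of quantum `SU_ν(2)`, presented by generators
`α = ι 0`, `α* = ι 1`, `γ = ι 2`, `γ* = ι 3` and the standard relations. -/

inductive SUqRel (ν : ℝ) : FreeAlgebra ℂ (Fin 4) → FreeAlgebra ℂ (Fin 4) → Prop
  | rel₁ : SUqRel ν (FreeAlgebra.ι ℂ 0 * FreeAlgebra.ι ℂ 2)
      ((ν : ℂ) • (FreeAlgebra.ι ℂ 2 * FreeAlgebra.ι ℂ 0))
  | rel₂ : SUqRel ν (FreeAlgebra.ι ℂ 0 * FreeAlgebra.ι ℂ 3)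
      ((ν : ℂ) • (FreeAlgebra.ι ℂ 3 * FreeAlgebra.ι ℂ 0))
  | rel₃ : SUqRel ν (FreeAlgebra.ι ℂ 1 * FreeAlgebra.ι ℂ 2)
      ((ν : ℂ)⁻¹ • (FreeAlgebra.ι ℂ 2 * FreeAlgebra.ι ℂ 1))
  | rel₄ : SUqRel ν (FreeAlgebra.ι ℂ 1 * FreeAlgebra.ι ℂ 3)
      ((ν : ℂ)⁻¹ • (FreeAlgebra.ι ℂ 3 * FreeAlgebra.ι ℂ 1))
  | rel₅ : SUqRel ν (FreeAlgebra.ι ℂ 2 * FreeAlgebra.ι ℂ 3)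
      (FreeAlgebra.ι ℂ 3 * FreeAlgebra.ι ℂ 2)
  | rel₆ : SUqRel ν (FreeAlgebra.ι ℂ 1 * FreeAlgebra.ι ℂ 0
      + FreeAlgebra.ι ℂ 3 * FreeAlgebra.ι ℂ 2) 1
  | rel₇ : SUqRel ν (FreeAlgebra.ι ℂ 0 * FreeAlgebra.ι ℂ 1
      + ((ν : ℂ) ^ 2) • (FreeAlgebra.ι ℂ 2 * FreeAlgebra.ι ℂ 3)) 1

abbrev SUqAlg (ν : ℝ) : Type := RingQuot (SUqRel ν)

noncomputable def aGen (ν : ℝ) : SUqAlg ν :=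
  RingQuot.mkAlgHom ℂ (SUqRel ν) (FreeAlgebra.ι ℂ 0)
noncomputable def asGen (ν : ℝ) : SUqAlg ν :=
  RingQuot.mkAlgHom ℂ (SUqRel ν) (FreeAlgebra.ι ℂ 1)
noncomputable def cGen (ν : ℝ) : SUqAlg ν :=
  RingQuot.mkAlgHom ℂ (SUqRel ν) (FreeAlgebra.ι ℂ 2)
noncomputable def csGen (ν : ℝ) : SUqAlg ν :=
  RingQuot.mkAlgHom ℂ (SUqRel ν) (FreeAlgebra.ι ℂ 3)


lemma x_mul_xs (q : ℝ) : xGen q * xsGen q = 1 := by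
  have := RingQuot.mkAlgHom_rel ℂ (CylRel.unitary₁ (q := q))
  simpa [xGen, xsGen, map_mul, map_one] using this

lemma xs_mul_x (q : ℝ) : xsGen q * xGen q = 1 := by
  have := RingQuot.mkAlgHom_rel ℂ (CylRel.unitary₂ (q := q))
  simpa [xGen, xsGen, map_mul, map_one] using this

lemma xpow_mul_xspow (q : ℝ) (n : ℕ) : xGen q ^ n * xsGen q ^ n = 1 := by
  induction n with
  | zero => simp
  | succ k ih =>
    rw [pow_succ, pow_succ', mul_assoc (xGen q ^ k), ← mul_assoc (xGen q),
      x_mul_xs, one_mul, ih]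

lemma xspow_mul_xpow (q : ℝ) (n : ℕ) : xsGen q ^ n * xGen q ^ n = 1 := by
  induction n with
  | zero => simp
  | succ k ih =>
    rw [pow_succ, pow_succ', mul_assoc (xsGen q ^ k), ← mul_assoc (xsGen q),
      xs_mul_x, one_mul, ih]

lemma mul'_comp_map (A B : Type) [Ring A] [Ring B] [Algebra ℂ A] [Algebra ℂ B]
    (τ : A →ₐ[ℂ] B) :
    LinearMap.mul' ℂ B ∘ₗ TensorProduct.map τ.toLinearMap τ.toLinearMap
      = τ.toLinearMap ∘ₗ LinearMap.mul' ℂ A := by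
  apply TensorProduct.ext'
  intro a b
  simp [LinearMap.mul'_apply, map_mul]

/-- For each `n ≥ 1` there is a unique unital algebra homomorphism
`τ⁽ⁿ⁾ : P(SU_ν(2)) → B₁` with `τ⁽ⁿ⁾(α) = xⁿ`, `τ⁽ⁿ⁾(α*) = (x*)ⁿ`,
`τ⁽ⁿ⁾(γ) = τ⁽ⁿ⁾(γ*) = 0`, and it is convolution invertible with convolution
inverse `τ⁽ⁿ⁾ ∘ S`, where `Δ`, `ε`, `S` are the Hopf structure maps of
`P(SU_ν(2))`. -/
theorem statement_10 (q ν : ℝ) (hq : 0 < q ∧ q ≤ 1) (hν : 0 < ν ∧ ν ≤ 1)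
    (Δ : SUqAlg ν →ₐ[ℂ] SUqAlg ν ⊗[ℂ] SUqAlg ν)
    (ε : SUqAlg ν →ₐ[ℂ] ℂ)
    (S : SUqAlg ν →ₗ[ℂ] SUqAlg ν)
    (hΔa : Δ (aGen ν) = aGen ν ⊗ₜ aGen ν - (ν : ℂ) • (csGen ν ⊗ₜ cGen ν))
    (hΔc : Δ (cGen ν) = cGen ν ⊗ₜ aGen ν + asGen ν ⊗ₜ cGen ν)
    (hΔas : Δ (asGen ν) = asGen ν ⊗ₜ asGen ν - (ν : ℂ) • (cGen ν ⊗ₜ csGen ν))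
    (hΔcs : Δ (csGen ν) = csGen ν ⊗ₜ asGen ν + aGen ν ⊗ₜ csGen ν)
    (hanti₁ : LinearMap.mul' ℂ (SUqAlg ν) ∘ₗ
        TensorProduct.map S LinearMap.id ∘ₗ Δ.toLinearMap
      = Algebra.linearMap ℂ (SUqAlg ν) ∘ₗ ε.toLinearMap)
    (hanti₂ : LinearMap.mul' ℂ (SUqAlg ν) ∘ₗ
        TensorProduct.map LinearMap.id S ∘ₗ Δ.toLinearMap
      = Algebra.linearMap ℂ (SUqAlg ν) ∘ₗ ε.toLinearMap)
    (n : ℕ) (hn : 1 ≤ n) :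
    (∃! τ : SUqAlg ν →ₐ[ℂ] CylAlg q,
      τ (aGen ν) = (xGen q) ^ n ∧ τ (asGen ν) = (xsGen q) ^ n ∧
      τ (cGen ν) = 0 ∧ τ (csGen ν) = 0) ∧
    (∀ τ : SUqAlg ν →ₐ[ℂ] CylAlg q,
      τ (aGen ν) = (xGen q) ^ n → τ (asGen ν) = (xsGen q) ^ n →
      τ (cGen ν) = 0 → τ (csGen ν) = 0 →
      LinearMap.mul' ℂ (CylAlg q) ∘ₗ
          TensorProduct.map (τ.toLinearMap ∘ₗ S) τ.toLinearMap ∘ₗ Δ.toLinearMap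
        = Algebra.linearMap ℂ (CylAlg q) ∘ₗ ε.toLinearMap ∧
      LinearMap.mul' ℂ (CylAlg q) ∘ₗ
          TensorProduct.map τ.toLinearMap (τ.toLinearMap ∘ₗ S) ∘ₗ Δ.toLinearMap
        = Algebra.linearMap ℂ (CylAlg q) ∘ₗ ε.toLinearMap) := by
  classical
  -- the algebra map on the free algebra
  set f : FreeAlgebra ℂ (Fin 4) →ₐ[ℂ] CylAlg q :=
    FreeAlgebra.lift ℂ ![xGen q ^ n, xsGen q ^ n, 0, 0] with hf
  have hf0 : f (FreeAlgebra.ι ℂ 0) = xGen q ^ n := by simp [hf]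
  have hf1 : f (FreeAlgebra.ι ℂ 1) = xsGen q ^ n := by simp [hf]
  have hf2 : f (FreeAlgebra.ι ℂ 2) = 0 := by simp [hf]
  have hf3 : f (FreeAlgebra.ι ℂ 3) = 0 := by simp [hf]
  have hrel : ∀ x y, SUqRel ν x y → f x = f y := by
    intro x y h
    induction h with
    | rel₁ => rw [map_mul, map_smul, map_mul]; simp [hf0, hf2]
    | rel₂ => rw [map_mul, map_smul, map_mul]; simp [hf0, hf3]
    | rel₃ => rw [map_mul, map_smul, map_mul]; simp [hf1, hf2]
    | rel₄ => rw [map_mul, map_smul, map_mul]; simp [hf1, hf3]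
    | rel₅ => simp [hf2, hf3]
    | rel₆ => simp [hf0, hf1, hf2, hf3, xspow_mul_xpow]
    | rel₇ => simp [hf0, hf1, hf2, hf3, xpow_mul_xspow]
  set τ₀ : SUqAlg ν →ₐ[ℂ] CylAlg q := RingQuot.liftAlgHom ℂ ⟨f, hrel⟩ with hτ₀
  have hτ₀app : ∀ a, τ₀ (RingQuot.mkAlgHom ℂ (SUqRel ν) a) = f a := fun a =>
    RingQuot.liftAlgHom_mkAlgHom_apply ℂ f hrel a
  have hprop : τ₀ (aGen ν) = xGen q ^ n ∧ τ₀ (asGen ν) = xsGen q ^ n ∧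
      τ₀ (cGen ν) = 0 ∧ τ₀ (csGen ν) = 0 := by
    refine ⟨?_, ?_, ?_, ?_⟩ <;>
      simp [aGen, asGen, cGen, csGen, hτ₀app, hf0, hf1, hf2, hf3]
  constructor
  · refine ⟨τ₀, hprop, ?_⟩
    rintro τ ⟨h0, h1, h2, h3⟩
    apply RingQuot.ringQuot_ext'
    apply FreeAlgebra.hom_ext
    funext i
    fin_cases i <;>
      simp_all [aGen, asGen, cGen, csGen, hτ₀app, hf0, hf1, hf2, hf3]
  · intro τ h0 h1 h2 h3
    have key : ∀ (S' : SUqAlg ν →ₗ[ℂ] SUqAlg ν) (T' : SUqAlg ν →ₗ[ℂ] SUqAlg ν),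
        (LinearMap.mul' ℂ (SUqAlg ν) ∘ₗ TensorProduct.map S' T' ∘ₗ Δ.toLinearMap
          = Algebra.linearMap ℂ (SUqAlg ν) ∘ₗ ε.toLinearMap) →
        LinearMap.mul' ℂ (CylAlg q) ∘ₗ
          TensorProduct.map (τ.toLinearMap ∘ₗ S') (τ.toLinearMap ∘ₗ T') ∘ₗ Δ.toLinearMap
          = Algebra.linearMap ℂ (CylAlg q) ∘ₗ ε.toLinearMap := by
      intro S' T' hST
      have h2' : τ.toLinearMap ∘ₗ Algebra.linearMap ℂ (SUqAlg ν)
          = Algebra.linearMap ℂ (CylAlg q) := by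
        apply LinearMap.ext; intro c; simp [Algebra.linearMap_apply]
      calc LinearMap.mul' ℂ (CylAlg q) ∘ₗ
            TensorProduct.map (τ.toLinearMap ∘ₗ S') (τ.toLinearMap ∘ₗ T') ∘ₗ Δ.toLinearMap
          = (LinearMap.mul' ℂ (CylAlg q) ∘ₗ TensorProduct.map τ.toLinearMap τ.toLinearMap)
              ∘ₗ TensorProduct.map S' T' ∘ₗ Δ.toLinearMap := by
            rw [TensorProduct.map_comp]; rfl
        _ = τ.toLinearMap ∘ₗ (LinearMap.mul' ℂ (SUqAlg ν)
              ∘ₗ TensorProduct.map S' T' ∘ₗ Δ.toLinearMap) := by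
            rw [mul'_comp_map]; rfl
        _ = τ.toLinearMap ∘ₗ Algebra.linearMap ℂ (SUqAlg ν) ∘ₗ ε.toLinearMap := by
            rw [hST]
        _ = Algebra.linearMap ℂ (CylAlg q) ∘ₗ ε.toLinearMap := by
            rw [← LinearMap.comp_assoc, h2']
    constructor
    · have := key S LinearMap.id hanti₁
      simpa using this
    · have := key LinearMap.id S hanti₂
      simpa using this
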